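/- arXiv:2105.08513 — 3 statements merged into one kernel-verified Lean document; each statement's English description precedes it below -/
import Mathlib

section
/- The function u(x) = (λ√(n(n-2))/(λ² + |x - x₀|²))^((n-2)/2) satisfies Δu + u^((n+2)/(n-2)) = 0 and u > 0 on ℝⁿ, for every λ > 0, x₀ ∈ ℝⁿ, and n ≥ 3. -/
open EuclideanSpace

noncomputable def laplacian {n : ℕ} (u : EuclideanSpace ℝ (Fin n) → ℝ)
    (x : EuclideanSpace ℝ (Fin n)) : ℝ :=
  ∑ i, fderiv ℝ (fun y => fderiv ℝ u y (EuclideanSpace.single i 1)) x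
    (EuclideanSpace.single i 1)

/-! For a radial function `u x = g ‖x - x₀‖²` on `ℝⁿ` one has
`Δu x = 2n g'(r²) + 4r² g''(r²)` with `r = ‖x - x₀‖`. The bubble is the radial function
with `g s = c^p (λ² + s)^(-p)`, where `p = (n-2)/2` and `c² = n(n-2)λ²`; then
`2n g'(t) + 4t g''(t) = -n(n-2)λ² c^p (λ² + t)^(-p-2) = -c^(p+2) (λ² + t)^(-p-2)`,
and the last expression is `-u^((n+2)/(n-2))` because `p (n+2)/(n-2) = p + 2`. -/

open scoped RealInnerProductSpace

section RadialDerivatives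

variable {E : Type*} [NormedAddCommGroup E] [InnerProductSpace ℝ E]
  {g g' : ℝ → ℝ} {x₀ : E}

theorem hasFDerivAt_comp_norm_sub_sq {d : ℝ} {y : E} (hg : HasDerivAt g d (‖y - x₀‖ ^ 2)) :
    HasFDerivAt (fun z => g (‖z - x₀‖ ^ 2)) ((2 * d) • innerSL ℝ (y - x₀)) y := by
  refine (hg.comp_hasFDerivAt y ((hasFDerivAt_id y).sub_const x₀).norm_sq).congr_fderiv ?_
  ext v
  simp only [smul_apply, ContinuousLinearMap.comp_id, id, smul_eq_mul]
  ring

theorem fderiv_comp_norm_sub_sq_apply (hg : ∀ s, 0 ≤ s → HasDerivAt g (g' s) s)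
    (y v : E) :
    fderiv ℝ (fun z => g (‖z - x₀‖ ^ 2)) y v = 2 * g' (‖y - x₀‖ ^ 2) * ⟪y - x₀, v⟫ := by
  rw [(hasFDerivAt_comp_norm_sub_sq (hg _ (by positivity))).fderiv]
  rfl

theorem hasFDerivAt_inner_sub_const (v x : E) :
    HasFDerivAt (fun y => ⟪y - x₀, v⟫) (innerSL ℝ v) x := by
  refine ((hasFDerivAt_id x).sub_const x₀ |>.inner ℝ (hasFDerivAt_const v x)).congr_fderiv ?_
  ext w
  simp [real_inner_comm]

theorem fderiv_fderiv_comp_norm_sub_sq_apply {g'' : ℝ} {x : E}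
    (hg : ∀ s, 0 ≤ s → HasDerivAt g (g' s) s) (hg' : HasDerivAt g' g'' (‖x - x₀‖ ^ 2))
    (v : E) :
    fderiv ℝ (fun y => fderiv ℝ (fun z => g (‖z - x₀‖ ^ 2)) y v) x v
      = 2 * g' (‖x - x₀‖ ^ 2) * ‖v‖ ^ 2 + 4 * g'' * ⟪x - x₀, v⟫ ^ 2 := by
  have hprod : HasFDerivAt (fun y => 2 * g' (‖y - x₀‖ ^ 2) * ⟪y - x₀, v⟫)
      ((2 * g' (‖x - x₀‖ ^ 2)) • innerSL ℝ v
        + ⟪x - x₀, v⟫ • (2 : ℝ) • (2 * g'') • innerSL ℝ (x - x₀)) x :=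
    ((hasFDerivAt_comp_norm_sub_sq hg').const_mul 2).mul (hasFDerivAt_inner_sub_const v x)
  simp_rw [fderiv_comp_norm_sub_sq_apply hg]
  rw [hprod.fderiv]
  simp only [add_apply, smul_apply, innerSL_apply_apply, smul_eq_mul, real_inner_self_eq_norm_sq]
  ring

end RadialDerivatives

theorem laplacian_comp_norm_sub_sq {n : ℕ} {g g' : ℝ → ℝ} {g'' : ℝ}
    {x₀ x : EuclideanSpace ℝ (Fin n)}
    (hg : ∀ s, 0 ≤ s → HasDerivAt g (g' s) s) (hg' : HasDerivAt g' g'' (‖x - x₀‖ ^ 2)) :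
    laplacian (fun y => g (‖y - x₀‖ ^ 2)) x
      = 2 * n * g' (‖x - x₀‖ ^ 2) + 4 * g'' * ‖x - x₀‖ ^ 2 := by
  simp only [laplacian, fderiv_fderiv_comp_norm_sub_sq_apply hg hg', PiLp.norm_single,
    norm_one, EuclideanSpace.inner_single_right, one_mul, one_pow, mul_one, conj_trivial]
  rw [Finset.sum_add_distrib, ← Finset.mul_sum _ _ (4 * g''), ← EuclideanSpace.real_norm_sq_eq,
    Finset.sum_const, Finset.card_univ, Fintype.card_fin, nsmul_eq_mul]
  ring

theorem hasDerivAt_add_rpow_const {a q s : ℝ} (hs : a + s ≠ 0) :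
    HasDerivAt (fun t => (a + t) ^ q) (q * (a + s) ^ (q - 1)) s := by
  simpa using ((hasDerivAt_id s).const_add a).rpow_const (p := q) (Or.inl hs)

theorem bubble_profile_equation {n p c lam t : ℝ} (hn : n ≠ 2) (hp : p = (n - 2) / 2)
    (hc : 0 < c) (hc_sq : c ^ 2 = n * (n - 2) * lam ^ 2) (hS : 0 < lam ^ 2 + t) :
    2 * n * (c ^ p * (-p * (lam ^ 2 + t) ^ (-p - 1)))
      + 4 * (c ^ p * (-p * ((-p - 1) * (lam ^ 2 + t) ^ (-p - 1 - 1)))) * t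
      + (c ^ p * (lam ^ 2 + t) ^ (-p)) ^ ((n + 2) / (n - 2)) = 0 := by
  have hexp : p * ((n + 2) / (n - 2)) = p + 2 := by
    have : n - 2 ≠ 0 := sub_ne_zero.mpr hn
    rw [hp]; field_simp; ring
  have hpow : (c ^ p * (lam ^ 2 + t) ^ (-p)) ^ ((n + 2) / (n - 2))
      = c ^ p * c ^ 2 * (lam ^ 2 + t) ^ (-p - 1 - 1) := by
    rw [Real.mul_rpow (by positivity) (by positivity), ← Real.rpow_mul hc.le,
      ← Real.rpow_mul hS.le, neg_mul, hexp, Real.rpow_add hc, Real.rpow_two]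
    ring_nf
  have hshift : (lam ^ 2 + t) ^ (-p - 1) = (lam ^ 2 + t) ^ (-p - 1 - 1) * (lam ^ 2 + t) := by
    rw [← Real.rpow_add_one hS.ne', sub_add_cancel]
  rw [hpow, hc_sq, hshift, hp]
  ring

/-- the standard bubble solves `Δu + u^((n+2)/(n-2)) = 0` and is positive. -/
theorem bubble_solves (n : ℕ) (hn : 3 ≤ n) (lam : ℝ) (hlam : 0 < lam)
    (x₀ : EuclideanSpace ℝ (Fin n))
    (u : EuclideanSpace ℝ (Fin n) → ℝ)
    (hu : ∀ x, u x =
      (lam * Real.sqrt ((n : ℝ) * ((n : ℝ) - 2)) / (lam ^ 2 + ‖x - x₀‖ ^ 2))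
        ^ (((n : ℝ) - 2) / 2)) :
    ∀ x, laplacian u x + u x ^ (((n : ℝ) + 2) / ((n : ℝ) - 2)) = 0 ∧ 0 < u x := by
  intro x
  have hn' : (2 : ℝ) < n := by exact_mod_cast hn
  have hnn : (0 : ℝ) < n * (n - 2) := by nlinarith
  set p : ℝ := ((n : ℝ) - 2) / 2 with hp
  set c : ℝ := lam * Real.sqrt ((n : ℝ) * ((n : ℝ) - 2)) with hc
  have hc0 : 0 < c := mul_pos hlam (Real.sqrt_pos.mpr hnn)
  have hS : ∀ s : ℝ, 0 ≤ s → 0 < lam ^ 2 + s := fun s hs => by positivity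
  have hSx := hS (‖x - x₀‖ ^ 2) (by positivity)
  refine ⟨?_, hu x ▸ Real.rpow_pos_of_pos (div_pos hc0 hSx) _⟩
  have hu' : u = fun y => c ^ p * (lam ^ 2 + ‖y - x₀‖ ^ 2) ^ (-p) := by
    funext y
    have hSy := (hS (‖y - x₀‖ ^ 2) (by positivity)).le
    rw [hu y, Real.div_rpow hc0.le hSy, Real.rpow_neg hSy, div_eq_mul_inv]
  rw [hu', laplacian_comp_norm_sub_sq
    (fun s hs => (hasDerivAt_add_rpow_const (hS s hs).ne').const_mul (c ^ p))
    (((hasDerivAt_add_rpow_const hSx.ne').const_mul (-p)).const_mul (c ^ p))]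
  exact bubble_profile_equation hn'.ne' hp hc0
    (by rw [hc, mul_pow, Real.sq_sqrt hnn.le]; ring) hSx
end

section
/- If a homogeneous polynomial p on ℝⁿ is hyperbolic with respect to a direction a ∈ ℝⁿ, then the directional derivative q(λ) = Σⱼ aⱼ ∂p/∂λⱼ(λ) is also hyperbolic with respect to a. -/
open MvPolynomial

/-- The univariate polynomial `t ↦ p(x + t a)` obtained from a multivariate
polynomial `p` by restricting to the line through `x` in direction `a`. -/
noncomputable def linePoly {n : ℕ} (p : MvPolynomial (Fin n) ℝ) (a x : Fin n → ℝ) :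
    Polynomial ℝ :=
  MvPolynomial.aeval (fun i => Polynomial.C (x i) + Polynomial.X * Polynomial.C (a i)) p

/-- `p` is hyperbolic of degree `m` with respect to the direction `a`. -/
def Hyperbolic {n : ℕ} (p : MvPolynomial (Fin n) ℝ) (a : Fin n → ℝ) (m : ℕ) : Prop :=
  p.IsHomogeneous m ∧ MvPolynomial.eval a p ≠ 0 ∧
    ∀ x : Fin n → ℝ, (linePoly p a x).roots.card = m

/-!
Restricted to a line `t ↦ x + t a`, the polynomial `q = Σⱼ aⱼ ∂ⱼ p` is the `t`-derivative of the
restriction of `p` (chain rule). If a real polynomial of degree at most `m` has `m` real roots,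
Rolle's theorem puts `m - 1` real roots on its derivative, which has degree at most `m - 1`.
Finally `q(a) = m p(a) ≠ 0` by Euler's identity.
-/

namespace MvPolynomial

variable {R σ : Type*} [CommSemiring R] [Fintype σ]

theorem derivative_aeval (f : σ → Polynomial R) (p : MvPolynomial σ R) :
    Polynomial.derivative (aeval f p) =
      ∑ i, aeval f (pderiv i p) * Polynomial.derivative (f i) := by
  classical
  induction p using MvPolynomial.induction_on with
  | C r => simp
  | add p q hp hq => simp only [map_add, hp, hq, add_mul, Finset.sum_add_distrib]
  | mul_X p i hp =>
    have hX : ∑ j, aeval f p * aeval f (pderiv j (X i : MvPolynomial σ R)) *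
        Polynomial.derivative (f j) = aeval f p * Polynomial.derivative (f i) := by
      simp [pderiv_X, Pi.single_apply]
    simp only [map_mul, aeval_X, Polynomial.derivative_mul, hp, Derivation.leibniz, smul_eq_mul,
      map_add, add_mul, Finset.sum_add_distrib, Finset.sum_mul, hX]
    rw [add_comm]
    exact congrArg (HAdd.hAdd _) (Finset.sum_congr rfl fun j _ => by ring)

theorem IsHomogeneous.sum_smul_pderiv {p : MvPolynomial σ R} {m : ℕ}
    (hp : p.IsHomogeneous m) (a : σ → R) :
    (∑ j, a j • pderiv j p).IsHomogeneous (m - 1) :=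
  IsHomogeneous.sum _ _ _ fun j _ => by
    rw [smul_eq_C_mul]
    exact hp.pderiv.C_mul _

theorem IsHomogeneous.eval_sum_smul_pderiv_self {p : MvPolynomial σ R} {m : ℕ}
    (hp : p.IsHomogeneous m) (a : σ → R) :
    eval a (∑ j, a j • pderiv j p) = m * eval a p := by
  simpa [smul_eq_mul] using congrArg (eval a) hp.sum_X_mul_pderiv

end MvPolynomial

theorem Polynomial.card_roots_derivative_of_natDegree_le_card_roots {f : Polynomial ℝ}
    (hf : f.natDegree ≤ f.roots.card) : f.derivative.roots.card = f.roots.card - 1 := by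
  have := card_roots_le_derivative f
  have := card_roots' f.derivative
  have := natDegree_derivative_le f
  omega

section linePoly

variable {n : ℕ} (p : MvPolynomial (Fin n) ℝ) (a x : Fin n → ℝ)

theorem linePoly_derivative :
    (linePoly p a x).derivative = linePoly (∑ j, a j • pderiv j p) a x := by
  simp only [linePoly, derivative_aeval, map_sum, map_smul, Polynomial.derivative_add,
    Polynomial.derivative_C, Polynomial.derivative_mul, Polynomial.derivative_X, zero_add,
    zero_mul, add_zero, one_mul, Polynomial.smul_eq_C_mul, mul_comm]

theorem natDegree_linePoly_le {m : ℕ} (hp : p.totalDegree ≤ m) :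
    (linePoly p a x).natDegree ≤ m := by
  have h := aeval_natDegree_le (n := 1) p hp
    (fun i => Polynomial.C (x i) + Polynomial.X * Polynomial.C (a i)) fun i => by
    rw [Polynomial.natDegree_C_add]
    exact Polynomial.natDegree_mul_le.trans (by simp)
  rwa [mul_one] at h

end linePoly

/-- if `p` is hyperbolic with respect to `a`, then
`q = Σⱼ aⱼ ∂ⱼ p` is hyperbolic (of degree `m - 1`) with respect to `a`. -/
theorem directional_derivative_hyperbolic (n m : ℕ) (hm : 1 ≤ m)
    (p : MvPolynomial (Fin n) ℝ) (a : Fin n → ℝ)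
    (hp : Hyperbolic p a m) :
    Hyperbolic (∑ j, a j • MvPolynomial.pderiv j p) a (m - 1) := by
  obtain ⟨hhom, hpa, hroots⟩ := hp
  refine ⟨hhom.sum_smul_pderiv a, ?_, fun x => ?_⟩
  · rw [hhom.eval_sum_smul_pderiv_self]
    exact mul_ne_zero (by positivity) hpa
  · have hdeg : (linePoly p a x).natDegree ≤ (linePoly p a x).roots.card :=
      hroots x ▸ natDegree_linePoly_le p a x hhom.totalDegree_le
    rw [← linePoly_derivative, Polynomial.card_roots_derivative_of_natDegree_le_card_roots hdeg,
      hroots x]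
end

section
/- On the positive orthant in ℝⁿ, for k > l, the partial derivatives of σₖ(λ)/σₗ(λ) with respect to each λᵢ are positive; in particular the quotient σₖ/σₗ is strictly increasing in each variable on Γₙ⁺. -/
/-! Freezing every variable but `λᵢ`, each `σⱼ` is affine in `λᵢ`: `σⱼ = eⱼ + λᵢ eⱼ₋₁`, where
`eⱼ` are the elementary symmetric functions of the other `n - 1` variables. Hence the derivative
of `σₖ/σₗ` has the sign of `eₖ₋₁ eₗ - eₖ eₗ₋₁` (of `eₖ₋₁` when `l = 0`), which is positive by
the Newton-type inequality `e_a e_{c+1} > e_{a+1} e_c` for `c < a ≤ m` on positive `m`-tuples.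
That inequality follows by induction on `m`: adjoining a variable `x` writes the new gap as a
combination of old gaps with coefficients `1`, `x`, `x²`. -/

/-- The `j`-th elementary symmetric polynomial of `λ₁,…,λₙ` (with `σ₀ = 1`). -/
def esymm (n j : ℕ) (lam : Fin n → ℝ) : ℝ :=
  ∑ s ∈ Finset.univ.powersetCard j, ∏ i ∈ s, lam i

namespace Multiset

variable {R : Type*}

@[simp]
theorem esymm_zero_right [CommSemiring R] (s : Multiset R) : s.esymm 0 = 1 := by
  simp [esymm]

theorem esymm_cons_succ [CommSemiring R] (x : R) (s : Multiset R) (j : ℕ) :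
    (x ::ₘ s).esymm (j + 1) = s.esymm (j + 1) + x * s.esymm j := by
  simp only [esymm, powersetCard_cons, map_add, sum_add, map_map, Function.comp_def, prod_cons,
    sum_map_mul_left]

theorem esymm_nonneg [CommSemiring R] [PartialOrder R] [IsOrderedRing R] {s : Multiset R}
    (hs : ∀ x ∈ s, 0 ≤ x) (j : ℕ) : 0 ≤ s.esymm j :=
  sum_nonneg fun _ hp ↦ by
    obtain ⟨t, ht, rfl⟩ := mem_map.1 hp
    exact prod_nonneg fun x hx ↦ hs x (mem_of_le (mem_powersetCard.1 ht).1 hx)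

theorem esymm_pos [CommSemiring R] [PartialOrder R] [IsStrictOrderedRing R] {s : Multiset R}
    (hs : ∀ x ∈ s, 0 < x) {j : ℕ} (hj : j ≤ card s) : 0 < s.esymm j := by
  induction s using Multiset.induction_on generalizing j with
  | empty => simp_all
  | cons x s ih =>
    have hs' : ∀ y ∈ s, 0 < y := fun y hy ↦ hs y (mem_cons_of_mem hy)
    cases j with
    | zero => simp
    | succ j =>
      rw [esymm_cons_succ]
      exact add_pos_of_nonneg_of_pos (esymm_nonneg (fun y hy ↦ (hs' y hy).le) _)
        (mul_pos (hs x (mem_cons_self x s)) (ih hs' (by simpa using hj)))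

variable [CommRing R]

def newtonGap (s : Multiset R) (a c : ℕ) : R :=
  s.esymm a * s.esymm (c + 1) - s.esymm (a + 1) * s.esymm c

theorem newtonGap_self (s : Multiset R) (a : ℕ) : s.newtonGap a a = 0 := by
  rw [newtonGap, mul_comm, sub_self]

theorem newtonGap_cons_zero (x : R) (s : Multiset R) (a : ℕ) :
    (x ::ₘ s).newtonGap (a + 1) 0 =
      s.newtonGap (a + 1) 0 + x * (s.esymm a * s.esymm 1) + x ^ 2 * s.esymm a := by
  simp only [newtonGap, esymm_cons_succ, esymm_zero_right]
  ring

theorem newtonGap_cons_succ (x : R) (s : Multiset R) (a c : ℕ) :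
    (x ::ₘ s).newtonGap (a + 1) (c + 1) = s.newtonGap (a + 1) (c + 1) +
      x * (s.newtonGap a (c + 1) + s.newtonGap (a + 1) c) + x ^ 2 * s.newtonGap a c := by
  simp only [newtonGap, esymm_cons_succ]
  ring

variable [LinearOrder R] [IsStrictOrderedRing R]

theorem newtonGap_nonneg {s : Multiset R} (hs : ∀ x ∈ s, 0 ≤ x) {a c : ℕ} (hca : c ≤ a) :
    0 ≤ s.newtonGap a c := by
  induction s using Multiset.induction_on generalizing a c with
  | empty =>
    simp [newtonGap, esymm, powersetCard_zero_right]
  | cons x s ih =>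
    have hx : 0 ≤ x := hs x (mem_cons_self x s)
    have hs' : ∀ y ∈ s, 0 ≤ y := fun y hy ↦ hs y (mem_cons_of_mem hy)
    obtain rfl | hca := hca.eq_or_lt
    · exact (newtonGap_self _ _).ge
    obtain ⟨a, rfl⟩ : ∃ a', a = a' + 1 := ⟨a - 1, by omega⟩
    cases c with
    | zero =>
      rw [newtonGap_cons_zero]
      have := esymm_nonneg hs' a
      exact add_nonneg (add_nonneg (ih hs' hca.le)
        (mul_nonneg hx (mul_nonneg this (esymm_nonneg hs' 1)))) (mul_nonneg (sq_nonneg x) this)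
    | succ c =>
      rw [newtonGap_cons_succ]
      exact add_nonneg (add_nonneg (ih hs' hca.le)
        (mul_nonneg hx (add_nonneg (ih hs' (by omega)) (ih hs' (by omega)))))
        (mul_nonneg (sq_nonneg x) (ih hs' (by omega)))

theorem newtonGap_pos {s : Multiset R} (hs : ∀ x ∈ s, 0 < x) {a c : ℕ} (hca : c < a)
    (ha : a ≤ card s) : 0 < s.newtonGap a c := by
  induction s using Multiset.induction_on generalizing a c with
  | empty => simp only [card_zero] at ha; omega
  | cons x s ih =>
    have hx : 0 < x := hs x (mem_cons_self x s)
    have hs' : ∀ y ∈ s, 0 < y := fun y hy ↦ hs y (mem_cons_of_mem hy)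
    have hs'' : ∀ y ∈ s, 0 ≤ y := fun y hy ↦ (hs' y hy).le
    obtain ⟨a, rfl⟩ : ∃ a', a = a' + 1 := ⟨a - 1, by omega⟩
    rw [card_cons, Nat.add_le_add_iff_right] at ha
    cases c with
    | zero =>
      rw [newtonGap_cons_zero]
      exact add_pos_of_nonneg_of_pos (add_nonneg (newtonGap_nonneg hs'' hca.le)
          (mul_nonneg hx.le (mul_nonneg (esymm_nonneg hs'' a) (esymm_nonneg hs'' 1))))
        (mul_pos (pow_pos hx 2) (esymm_pos hs' ha))
    | succ c =>
      rw [newtonGap_cons_succ]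
      exact add_pos_of_nonneg_of_pos (add_nonneg (newtonGap_nonneg hs'' hca.le)
          (mul_nonneg hx.le (add_nonneg (newtonGap_nonneg hs'' (by omega))
            (newtonGap_nonneg hs'' (by omega)))))
        (mul_pos (pow_pos hx 2) (ih hs' (by omega) ha))

end Multiset

theorem Finset.map_update_val {ι α : Type*} [DecidableEq ι] {s : Finset ι} {i : ι} (hi : i ∈ s)
    (f : ι → α) (t : α) :
    s.val.map (Function.update f i t) = t ::ₘ (s.erase i).val.map f := by
  rw [← Multiset.cons_erase (Finset.mem_def.1 hi), Multiset.map_cons, Function.update_self,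
    Finset.erase_val]
  exact congrArg _ (Multiset.map_congr rfl fun j hj ↦
    Function.update_of_ne (s.nodup.mem_erase_iff.1 hj).1 _ _)

theorem hasDerivAt_affine_div_affine (a b c d x : ℝ) (h : c + x * d ≠ 0) :
    HasDerivAt (fun t ↦ (a + t * b) / (c + t * d)) ((b * c - a * d) / (c + x * d) ^ 2) x := by
  refine ((((hasDerivAt_id x).mul_const b).const_add a).div
    (((hasDerivAt_id x).mul_const d).const_add c) h).congr_deriv ?_
  simp only [id]
  ring

theorem esymm_eq_esymm_map (n j : ℕ) (lam : Fin n → ℝ) :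
    esymm n j lam = (Finset.univ.val.map lam).esymm j :=
  (Finset.esymm_map_val lam Finset.univ j).symm

theorem esymm_zero (n : ℕ) (lam : Fin n → ℝ) : esymm n 0 lam = 1 := by
  simp [esymm_eq_esymm_map]

theorem esymm_pos {n j : ℕ} (hj : j ≤ n) {lam : Fin n → ℝ} (hlam : ∀ i, 0 < lam i) :
    0 < esymm n j lam := by
  rw [esymm_eq_esymm_map]
  exact Multiset.esymm_pos (by simpa using fun i ↦ hlam i) (by simpa using hj)

theorem esymm_update_succ {n : ℕ} (j : ℕ) (lam : Fin n → ℝ) (i : Fin n) (t : ℝ) :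
    esymm n (j + 1) (Function.update lam i t) =
      ((Finset.univ.erase i).val.map lam).esymm (j + 1) +
        t * ((Finset.univ.erase i).val.map lam).esymm j := by
  rw [esymm_eq_esymm_map, Finset.map_update_val (Finset.mem_univ i), Multiset.esymm_cons_succ]

/-- on the positive orthant, for `l < k ≤ n`, the partial derivative of
`σₖ/σₗ` in each variable `λᵢ` is positive; in particular `σₖ/σₗ` is strictly
increasing in each variable there. -/
theorem esymm_quotient_monotone (n k l : ℕ) (hl : l < k) (hk : k ≤ n)
    (lam : Fin n → ℝ) (hlam : ∀ i, 0 < lam i) (i : Fin n) :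
    0 < deriv (fun t : ℝ =>
        esymm n k (Function.update lam i t) / esymm n l (Function.update lam i t))
      (lam i) := by
  obtain ⟨k, rfl⟩ : ∃ k', k = k' + 1 := ⟨k - 1, by omega⟩
  set M := (Finset.univ.erase i).val.map lam
  have hM : ∀ x ∈ M, 0 < x := by simp [M, hlam]
  have hcard : k ≤ Multiset.card M := by simpa [M] using Nat.le_sub_one_of_lt hk
  obtain ⟨c, d, hden, hgap⟩ : ∃ c d : ℝ, (∀ t, esymm n l (Function.update lam i t) = c + t * d) ∧
      0 < M.esymm k * c - M.esymm (k + 1) * d := by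
    cases l with
    | zero => exact ⟨1, 0, fun t ↦ by simp [esymm_zero], by simpa using Multiset.esymm_pos hM hcard⟩
    | succ l => exact ⟨_, _, esymm_update_succ l lam i, Multiset.newtonGap_pos hM (by omega) hcard⟩
  have hdpos : 0 < c + lam i * d := by
    rw [← hden, Function.update_eq_self]
    exact esymm_pos (by omega) hlam
  simp only [esymm_update_succ, hden]
  rw [(hasDerivAt_affine_div_affine _ _ c d _ hdpos.ne').deriv]
  exact div_pos hgap (pow_pos hdpos 2)
end
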